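/- Suppose n ≤ q-1 is even and A = {a_1,…,a_n} ⊆ F_q^* satisfies η(-a_i·δ_A(a_i)) = 1 for all i and η(-∏_{i=1}^n a_i) = 1. Then there exists a q-ary MDS Euclidean self-dual code of length n+2. -/

import Mathlib

open Finset

variable {F : Type*} [Field F]

/-- `δ_A(aᵢ)` for a listed set `a : Fin n → F`. -/
noncomputable def delta {n : ℕ} (a : Fin n → F) (i : Fin n) : F :=
  ∏ j ∈ Finset.univ.erase i, (a i - a j)

/-- `δ_S(x)` for a finite set `S ⊆ F`. -/
noncomputable def deltaSet [DecidableEq F] (S : Finset F) (x : F) : F :=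
  ∏ y ∈ S.erase x, (x - y)

/-- Euclidean dual of a linear code. -/
def dualCode {n : ℕ} (C : Submodule F (Fin n → F)) : Submodule F (Fin n → F) where
  carrier := {x | ∀ y ∈ C, ∑ i, x i * y i = 0}
  add_mem' := by
    intro x y hx hy z hz
    simp [add_mul, Finset.sum_add_distrib, hx z hz, hy z hz]
  zero_mem' := by intro y hy; simp
  smul_mem' := by
    intro c x hx y hy
    simp [smul_eq_mul, mul_assoc, ← Finset.mul_sum, hx y hy]

/-- Hamming weight. -/
noncomputable def wt {n : ℕ} (c : Fin n → F) : ℕ := Nat.card {i // c i ≠ 0}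

/-- `C` is an `[n, k, n-k+1]` MDS code. -/
noncomputable def IsMDSCode {n : ℕ} (C : Submodule F (Fin n → F)) (k : ℕ) : Prop :=
  Module.finrank F C = k ∧ ∀ c ∈ C, c ≠ 0 → n - k + 1 ≤ wt c

noncomputable def GRSmap {n : ℕ} (a v : Fin n → F) : Polynomial F →ₗ[F] (Fin n → F) where
  toFun f := fun i => v i * Polynomial.eval (a i) f
  map_add' f g := by funext i; simp [mul_add]
  map_smul' c f := by funext i; simp [Polynomial.eval_smul]; ring

/-- Generalized Reed–Solomon code `GRS_k(A, v)`. -/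
noncomputable def GRS {n : ℕ} (k : ℕ) (a v : Fin n → F) : Submodule F (Fin n → F) :=
  Submodule.map (GRSmap a v) (Polynomial.degreeLT F k)

noncomputable def GRSextMap {n : ℕ} (k : ℕ) (a v : Fin n → F) :
    Polynomial F →ₗ[F] (Fin (n+1) → F) where
  toFun f := fun i =>
    if h : (i : ℕ) < n then v ⟨i, h⟩ * Polynomial.eval (a ⟨i, h⟩) f else f.coeff (k - 1)
  map_add' f g := by
    funext i
    by_cases h : (i : ℕ) < n <;> simp [h, mul_add]
  map_smul' c f := by
    funext i
    by_cases h : (i : ℕ) < n <;> simp [h, Polynomial.eval_smul] <;> ring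

/-- Extended generalized Reed–Solomon code `GRS_k(A ∪ {∞}, v)`. -/
noncomputable def GRSext {n : ℕ} (k : ℕ) (a v : Fin n → F) : Submodule F (Fin (n+1) → F) :=
  Submodule.map (GRSextMap k a v) (Polynomial.degreeLT F k)

/-!
Take `b = A ∪ {0}` as evaluation points. Then `δ_b(aᵢ) = aᵢ δ_A(aᵢ)` and, `n` being even,
`δ_b(0) = ∏ aᵢ`, so the hypotheses say that every `-δ_b(x)` is a square `1 / vₓ²`. The extended
GRS code of dimension `n/2 + 1` on `b ∪ {∞}` with column multipliers `vₓ` is MDS, and it is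
self-orthogonal: by Lagrange interpolation `∑ₓ vₓ² (fg)(x) = -(fg)_n = -f_{n/2} g_{n/2}`, which the
coordinate at `∞` cancels. Its dimension being half its length, it is self-dual.
-/

open Polynomial

lemma delta_ne_zero {n : ℕ} {a : Fin n → F} (ha : Function.Injective a) (i : Fin n) :
    delta a i ≠ 0 :=
  prod_ne_zero_iff.mpr fun _ hj => sub_ne_zero.mpr (ha.ne (ne_of_mem_erase hj).symm)

lemma delta_snoc_castSucc {n : ℕ} (a : Fin n → F) (x : F) (i : Fin n) :
    delta (Fin.snoc a x : Fin (n + 1) → F) i.castSucc = (a i - x) * delta a i := by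
  simp only [delta, ← filter_ne', prod_filter, Fin.prod_univ_castSucc, Fin.snoc_castSucc,
    Fin.snoc_last, ne_eq, Fin.castSucc_inj, (Fin.castSucc_lt_last i).ne', not_false_eq_true,
    if_true]
  ring

lemma delta_snoc_last {n : ℕ} (a : Fin n → F) (x : F) :
    delta (Fin.snoc a x : Fin (n + 1) → F) (Fin.last n) = ∏ i, (x - a i) := by
  simp [delta, ← filter_ne', prod_filter, Fin.prod_univ_castSucc]

lemma exists_sq_mul_eq_neg_one {d : F} (hd : d ≠ 0) (h : IsSquare (-d)) :
    ∃ v : F, v ^ 2 * d = -1 := by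
  obtain ⟨r, hr⟩ := h
  have hr0 : r ≠ 0 := by rintro rfl; simp_all
  exact ⟨r⁻¹, by field_simp; linear_combination -hr⟩

lemma Fin.card_filter_univ_castSucc {n : ℕ} (p : Fin (n + 1) → Prop) [DecidablePred p] :
    #{x | p x} = #{x : Fin n | p x.castSucc} + if p (Fin.last n) then 1 else 0 := by
  simp only [card_filter, Fin.sum_univ_castSucc]

lemma card_filter_eval_eq_zero_le {ι : Type*} [Fintype ι] [DecidableEq F] {a : ι → F}
    (ha : Function.Injective a) {f : F[X]} (hf : f ≠ 0) :
    #{i | f.eval (a i) = 0} ≤ f.natDegree := by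
  rw [← card_image_of_injective _ ha]
  refine card_le_degree_of_subset_roots fun x hx => ?_
  obtain ⟨i, hi, rfl⟩ := mem_image.mp hx
  exact (mem_roots hf).mpr (mem_filter.mp hi).2

lemma wt_add_card_filter_eq_zero {m : ℕ} [DecidableEq F] (c : Fin m → F) :
    wt c + #{i | c i = 0} = m := by
  rw [wt, Nat.card_eq_fintype_card, Fintype.card_subtype, add_comm,
    card_filter_add_card_filter_not, card_univ, Fintype.card_fin]

section GRSext

variable {n k : ℕ} {a v : Fin n → F}

@[simp]
lemma GRSextMap_castSucc (f : F[X]) (j : Fin n) :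
    GRSextMap k a v f j.castSucc = v j * f.eval (a j) := by
  simp [GRSextMap]

@[simp]
lemma GRSextMap_last (f : F[X]) : GRSextMap k a v f (Fin.last n) = f.coeff (k - 1) := by
  simp [GRSextMap]

/-- `f` has at most `deg f` roots among the `aᵢ`, and when `deg f = k - 1` the coordinate at `∞`
is its nonzero leading coefficient. -/
lemma card_filter_GRSextMap_eq_zero_le [DecidableEq F] (ha : Function.Injective a)
    (hv : ∀ i, v i ≠ 0) {f : F[X]} (hf : f ∈ degreeLT F k) (hf0 : f ≠ 0) :
    #{i | GRSextMap k a v f i = 0} ≤ k - 1 := by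
  have hroots := card_filter_eval_eq_zero_le ha hf0
  have hdeg : f.natDegree < k := (natDegree_lt_iff_degree_lt hf0).mpr (mem_degreeLT.mp hf)
  rw [Fin.card_filter_univ_castSucc]
  simp only [GRSextMap_castSucc, mul_eq_zero, hv, false_or, GRSextMap_last]
  split_ifs with hlead
  · have : f.natDegree ≠ k - 1 := fun h => leadingCoeff_ne_zero.mpr hf0 (by rwa [leadingCoeff, h])
    omega
  · omega

lemma injective_domRestrict_GRSextMap_degreeLT (ha : Function.Injective a) (hv : ∀ i, v i ≠ 0)
    (hk : k ≤ n + 1) : Function.Injective ((GRSextMap k a v).domRestrict (degreeLT F k)) := by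
  classical
  rw [← LinearMap.ker_eq_bot, Submodule.eq_bot_iff]
  rintro ⟨f, hf⟩ hf0
  by_contra hne
  have hne : f ≠ 0 := by simpa using hne
  have hzeros := card_filter_GRSextMap_eq_zero_le ha hv hf hne
  rw [LinearMap.mem_ker, LinearMap.domRestrict_apply] at hf0
  simp only [hf0, Pi.zero_apply, filter_true, card_univ, Fintype.card_fin] at hzeros
  omega

theorem GRSext_isMDSCode (ha : Function.Injective a) (hv : ∀ i, v i ≠ 0) (hk : k ≤ n + 1) :
    IsMDSCode (GRSext k a v) k := by
  classical
  refine ⟨?_, ?_⟩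
  · rw [GRSext, ← LinearMap.range_domRestrict,
      LinearMap.finrank_range_of_inj (injective_domRestrict_GRSextMap_degreeLT ha hv hk),
      (degreeLTEquiv F k).finrank_eq, Module.finrank_fin_fun]
  · rintro c ⟨f, hf, rfl⟩ hc
    have hf0 : f ≠ 0 := by rintro rfl; exact hc (map_zero _)
    have := (natDegree_lt_iff_degree_lt hf0).mpr (mem_degreeLT.mp hf)
    have := card_filter_GRSextMap_eq_zero_le ha hv hf hf0
    have := wt_add_card_filter_eq_zero (GRSextMap k a v f)
    omega

end GRSext

lemma dualCode_eq_orthogonal {m : ℕ} (C : Submodule F (Fin m → F)) :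
    dualCode C = (Matrix.toBilin' (1 : Matrix (Fin m) (Fin m) F)).orthogonal C := by
  ext x
  simp only [LinearMap.BilinForm.mem_orthogonal_iff, Matrix.toBilin'_apply', Matrix.one_mulVec,
    dotProduct]
  simp_rw [mul_comm]
  rfl

lemma finrank_dualCode {m : ℕ} (C : Submodule F (Fin m → F)) :
    Module.finrank F (dualCode C) = m - Module.finrank F C := by
  rw [dualCode_eq_orthogonal, LinearMap.BilinForm.finrank_orthogonal
      (LinearMap.BilinForm.nondegenerate_toBilin'_of_det_ne_zero' _ (by simp)),
    Module.finrank_fin_fun]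

lemma eq_dualCode_of_le_dualCode {m : ℕ} {C : Submodule F (Fin m → F)} (hC : C ≤ dualCode C)
    (hdim : Module.finrank F C + Module.finrank F C = m) : C = dualCode C :=
  Submodule.eq_of_le_of_finrank_le hC (by rw [finrank_dualCode]; omega)

theorem GRSext_le_dualCode {m : ℕ} {a v : Fin (m + m + 1) → F} (ha : Function.Injective a)
    (hv : ∀ i, v i ^ 2 * delta a i = -1) :
    GRSext (m + 1) a v ≤ dualCode (GRSext (m + 1) a v) := by
  rintro _ ⟨f, hf, rfl⟩ _ ⟨g, hg, rfl⟩
  rw [SetLike.mem_coe, degreeLT_succ_eq_degreeLE, mem_degreeLE] at hf hg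
  have hf := natDegree_le_of_degree_le hf
  have hg := natDegree_le_of_degree_le hg
  have hfg : (f * g).degree < #(univ : Finset (Fin (m + m + 1))) := by
    rw [card_univ, Fintype.card_fin]
    refine (degree_le_of_natDegree_le (natDegree_mul_le_of_le hf hg)).trans_lt ?_
    exact_mod_cast Nat.lt_succ_self _
  have hlagrange : f.coeff m * g.coeff m = ∑ i, (f * g).eval (a i) / delta a i := by
    rw [← coeff_mul_add_eq_of_natDegree_le hf hg]
    simpa [delta] using Lagrange.coeff_eq_sum ha.injOn hfg
  have hterm : ∀ i, v i * f.eval (a i) * (v i * g.eval (a i)) =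
      -((f * g).eval (a i) / delta a i) := by
    intro i
    have hδ : delta a i ≠ 0 := delta_ne_zero ha i
    rw [eval_mul]
    field_simp
    linear_combination (f.eval (a i) * g.eval (a i)) * hv i
  change ∑ i : Fin (m + m + 1 + 1), _ = (0 : F)
  simp only [Fin.sum_univ_castSucc, GRSextMap_castSucc, GRSextMap_last, hterm, sum_neg_distrib,
    ← hlagrange, Nat.add_sub_cancel]
  ring

theorem stmt4_general {F : Type*} [Field F]
    {n : ℕ} (hn : Even n)
    (a : Fin n ↪ F) (h0 : ∀ i, a i ≠ 0)
    (h1 : ∀ i, IsSquare (-(a i * delta ⇑a i)))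
    (h2 : IsSquare (-∏ i, a i)) :
    ∃ C : Submodule F (Fin (n + 2) → F), IsMDSCode C ((n + 2) / 2) ∧ C = dualCode C := by
  obtain ⟨m, rfl⟩ := hn
  set b : Fin (m + m + 1) → F := Fin.snoc a 0
  have hb : Function.Injective b :=
    Fin.snoc_injective_of_injective a.injective fun ⟨i, hi⟩ => h0 i hi
  have hsq : ∀ i, IsSquare (-delta b i) := by
    refine Fin.lastCases ?_ fun i => ?_
    · simpa [b, delta_snoc_last, prod_neg, Even.neg_one_pow ⟨m, rfl⟩] using h2
    · simpa [b, delta_snoc_castSucc] using h1 i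
  choose v hv using fun i => exists_sq_mul_eq_neg_one (delta_ne_zero hb i) (hsq i)
  have hv0 : ∀ i, v i ≠ 0 := fun i h => by simpa [h] using hv i
  have hMDS := GRSext_isMDSCode hb hv0 (k := m + 1) (by omega)
  refine ⟨GRSext (m + 1) b v, by rwa [show (m + m + 2) / 2 = m + 1 by omega], ?_⟩
  exact eq_dualCode_of_le_dualCode (GRSext_le_dualCode hb hv) (by rw [hMDS.1]; omega)

/-- Corollary 1: if `n ≤ q - 1` is even, `A ⊆ F_q^*`, `η(-aᵢ δ_A(aᵢ)) = 1` for all `i` and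
`η(-∏ aᵢ) = 1`, then there exists a `q`-ary MDS Euclidean self-dual code of length `n + 2`. -/
theorem stmt4 {F : Type*} [Field F] [Fintype F] (hodd : Odd (Fintype.card F))
    {n : ℕ} (hn : Even n) (hle : n ≤ Fintype.card F - 1)
    (a : Fin n ↪ F) (h0 : ∀ i, a i ≠ 0)
    (h1 : ∀ i, IsSquare (-(a i * delta ⇑a i)))
    (h2 : IsSquare (-∏ i, a i)) :
    ∃ C : Submodule F (Fin (n + 2) → F), IsMDSCode C ((n + 2) / 2) ∧ C = dualCode C :=
  stmt4_general hn a h0 h1 h2
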